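/- arXiv:1701.04954 — 2 statements merged into one kernel-verified Lean document; each statement's English description precedes it below -/
import Mathlib

section
/- Let L be a positive integer, 1 ≤ w_s ≤ L−1 an integer, and δ a real number with 0 < δ < min{δ*, 4/L}, where δ* = 2(w_s/L)(1−w_s/L). Then σ(L,δ,w_s/L) ≤ (1/L)·log(Σ_{j=w_s}^{L} C(L,j)) − (1/L)·h(Lδ/4) − (δ/4)·log((L−w_s)(w_s+1)), where C(a,b) denotes the binomial coefficient (asymptotic sphere-packing bound for SECCs). -/
open Finset Filter

/-- Weight (number of ones) of a binary word. -/
def wt {n : ℕ} (x : Fin n → Bool) : ℕ := (Finset.univ.filter fun i => x i = true).card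

/-- The index (in a word of length `m * L`) of position `j` of subblock `i`. -/
def subIdx (m L : ℕ) (i : Fin m) (j : Fin L) : Fin (m * L) :=
  ⟨i.val * L + j.val, by
    have hj : j.val < L := j.isLt
    have hi : i.val + 1 ≤ m := i.isLt
    calc i.val * L + j.val < i.val * L + L := Nat.add_lt_add_left hj _
      _ = (i.val + 1) * L := by ring
      _ ≤ m * L := Nat.mul_le_mul hi (Nat.le_refl L)⟩

/-- The `i`-th subblock (of length `L`) of a binary word of length `m * L`. -/
def subblock (m L : ℕ) (x : Fin (m * L) → Bool) (i : Fin m) : Fin L → Bool :=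
  fun j => x (subIdx m L i j)

/-- The CSCC space: binary words of length `m * L` each of whose `m` subblocks of
length `L` has weight exactly `w`. -/
def CSCCspace (m L w : ℕ) : Set (Fin (m * L) → Bool) :=
  {x | ∀ i : Fin m, wt (subblock m L x i) = w}

/-- The SECC space: binary words of length `m * L` each of whose `m` subblocks of
length `L` has weight at least `w`. -/
def SECCspace (m L w : ℕ) : Set (Fin (m * L) → Bool) :=
  {x | ∀ i : Fin m, w ≤ wt (subblock m L x i)}

/-- A code with minimum distance `d` inside the space `Sp`. -/
def isCode {n : ℕ} (Sp : Set (Fin n → Bool)) (d : ℕ) (C : Finset (Fin n → Bool)) : Prop :=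
  (↑C : Set (Fin n → Bool)) ⊆ Sp ∧ ∀ x ∈ C, ∀ y ∈ C, x ≠ y → d ≤ hammingDist x y

/-- The ball of radius `t` around `x`, taken inside the space `Sp`. -/
def ball {n : ℕ} (Sp : Set (Fin n → Bool)) (x : Fin n → Bool) (t : ℕ) :
    Set (Fin n → Bool) :=
  {y | y ∈ Sp ∧ hammingDist x y ≤ t}

/-- `C(m,L,d,w)`: the maximum size of an `(m,L,d,w)`-CSCC. -/
noncomputable def maxCSCC (m L d w : ℕ) : ℕ :=
  sSup {k | ∃ C : Finset (Fin (m * L) → Bool), isCode (CSCCspace m L w) d C ∧ C.card = k}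

/-- `S(m,L,d,w)`: the maximum size of an `(m,L,d,w)`-SECC. -/
noncomputable def maxSECC (m L d w : ℕ) : ℕ :=
  sSup {k | ∃ C : Finset (Fin (m * L) → Bool), isCode (SECCspace m L w) d C ∧ C.card = k}

/-- `A(n,d,w)`: the maximum size of a constant weight code. -/
noncomputable def maxCWC (n d w : ℕ) : ℕ :=
  sSup {k | ∃ C : Finset (Fin n → Bool), isCode {x | wt x = w} d C ∧ C.card = k}

/-- `H(n,d,w)`: the maximum size of a heavy weight code. -/
noncomputable def maxHWC (n d w : ℕ) : ℕ :=
  sSup {k | ∃ C : Finset (Fin n → Bool), isCode {x | w ≤ wt x} d C ∧ C.card = k}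

/-- `A(n,d)`: the maximum size of a binary code of length `n` and distance `d`. -/
noncomputable def maxBinary (n d : ℕ) : ℕ :=
  sSup {k | ∃ C : Finset (Fin n → Bool),
    (∀ x ∈ C, ∀ y ∈ C, x ≠ y → d ≤ hammingDist x y) ∧ C.card = k}

/-- `A_q(n,d)`: the maximum size of a `q`-ary code of length `n` and distance `d`. -/
noncomputable def maxQary (q n d : ℕ) : ℕ :=
  sSup {k | ∃ C : Finset (Fin n → Fin q),
    (∀ x ∈ C, ∀ y ∈ C, x ≠ y → d ≤ hammingDist x y) ∧ C.card = k}

/-- The size of a radius-`r` CSCC ball: the sum over all tuples `(u_1, …, u_m)` with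
`0 ≤ u_i ≤ min{w, L-w}` and `2(u_1 + ⋯ + u_m) ≤ r` of `∏ i, C(w,u_i)·C(L-w,u_i)`. -/
def csccBallSize (m L w r : ℕ) : ℕ :=
  ∑ u ∈ (Finset.univ : Finset (Fin m → Fin (min w (L - w) + 1))).filter
      (fun u => 2 * (∑ i, (u i : ℕ)) ≤ r),
    ∏ i, (w.choose (u i : ℕ)) * ((L - w).choose (u i : ℕ))

/-- The binary entropy function (base-2 logarithms, `h 0 = h 1 = 0`). -/
noncomputable def binent (p : ℝ) : ℝ :=
  -(p * Real.logb 2 p) - (1 - p) * Real.logb 2 (1 - p)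

/-- The asymptotic CSCC rate `γ(L,δ,w/L)`. -/
noncomputable def gammaRate (L : ℕ) (δ : ℝ) (w : ℕ) : ℝ :=
  Filter.limsup (fun m : ℕ =>
    Real.logb 2 (maxCSCC m L ⌊(m : ℝ) * L * δ⌋₊ w) / ((m : ℝ) * L)) Filter.atTop

/-- The asymptotic SECC rate `σ(L,δ,w/L)`. -/
noncomputable def sigmaRate (L : ℕ) (δ : ℝ) (w : ℕ) : ℝ :=
  Filter.limsup (fun m : ℕ =>
    Real.logb 2 (maxSECC m L ⌊(m : ℝ) * L * δ⌋₊ w) / ((m : ℝ) * L)) Filter.atTop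

/-!
A code of minimum distance `d > 4 e` has pairwise disjoint Hamming balls of radius `2 e`. Around
any word of the SECC space such a ball contains at least `C(m, e) ((L - w) (w + 1))^e` words of
the space: choose `e` subblocks and replace each by one of its at least `(L - w) (w + 1)`
neighbours of weight `≥ w` at distance `≤ 2` (of the `C(L + 1, 2)` toggles of one or two
positions, at most `C(w + 1, 2)` drop the weight below `w`). The space has at most `N^m` words,
`N = ∑_{j ≥ w} C(L, j)`, so `S(m, L, d, w) C(m, e) ((L - w) (w + 1))^e ≤ N^m`. Since the
binomial distribution with mean `e` has its mode at `e`, `C(m, e) ≥ 2^(m h(e / m)) / (m + 1)`.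
Taking `e ≈ m L δ / 4`, dividing the logarithm by `m L` and letting `m → ∞` gives the bound.
-/

open scoped Topology symmDiff

namespace SECC

section Blocks

variable {m L : ℕ}

lemma subIdx_eq_finProdFinEquiv (i : Fin m) (j : Fin L) :
    subIdx m L i j = finProdFinEquiv (i, j) := by
  ext
  simp only [subIdx, finProdFinEquiv_apply_val]
  ring

def blockEquiv (m L : ℕ) : (Fin (m * L) → Bool) ≃ (Fin m → Fin L → Bool) :=
  (finProdFinEquiv.arrowCongr (Equiv.refl Bool)).symm.trans (Equiv.curry _ _ _)

@[simp]
lemma blockEquiv_apply (x : Fin (m * L) → Bool) : blockEquiv m L x = subblock m L x := by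
  ext i j
  simp [blockEquiv, subblock, subIdx_eq_finProdFinEquiv]

lemma hammingDist_eq_sum_subblock (x y : Fin (m * L) → Bool) :
    hammingDist x y = ∑ i, hammingDist (subblock m L x i) (subblock m L y i) := by
  simp only [hammingDist, card_filter]
  rw [← finProdFinEquiv.sum_comp, Fintype.sum_prod_type]
  simp [subblock, subIdx_eq_finProdFinEquiv]

end Blocks

section SmallSets

variable {α : Type*} [Fintype α] [DecidableEq α]

lemma card_filter_one_le_card_le_two :
    #{s : Finset α | 1 ≤ #s ∧ #s ≤ 2} = (Fintype.card α + 1).choose 2 := by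
  have h : ({s : Finset α | 1 ≤ #s ∧ #s ≤ 2} : Finset _) =
      powersetCard 1 univ ∪ powersetCard 2 univ := by
    ext s
    simp only [mem_filter, mem_univ, true_and, mem_union, mem_powersetCard_univ]
    omega
  rw [h, card_union_of_disjoint, card_powersetCard, card_powersetCard, card_univ,
    Nat.choose_succ_succ', Nat.choose_one_right]
  exact disjoint_left.mpr fun s h1 h2 => by
    rw [mem_powersetCard_univ] at h1 h2
    omega

/-- Such an `s` lies inside `O` and has `#O < w + #s ≤ w + 2`. -/
lemma card_filter_card_symmDiff_lt_le (O : Finset α) {w : ℕ} (hw : w ≤ #O) :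
    #{s : Finset α | (1 ≤ #s ∧ #s ≤ 2) ∧ #(O ∆ s) < w} ≤ (w + 1).choose 2 := by
  have key : ∀ s : Finset α, (1 ≤ #s ∧ #s ≤ 2) ∧ #(O ∆ s) < w → s ⊆ O ∧ #O < w + #s := by
    rintro s ⟨⟨-, hs2⟩, hlt⟩
    rw [Finset.symmDiff_def, card_union_of_disjoint disjoint_sdiff_sdiff] at hlt
    have hO := card_sdiff_add_card_inter O s
    have hs := card_inter_add_card_sdiff s O
    rw [inter_comm] at hs
    have hsub : s ⊆ O := by
      by_contra hsO
      have := card_pos.mpr (sdiff_nonempty.mpr hsO)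
      omega
    rw [sdiff_eq_empty_iff_subset.mpr hsub, card_empty] at hs
    exact ⟨hsub, by omega⟩
  set j := #O with hj
  obtain hjw | hjw | hjw : j = w ∨ j = w + 1 ∨ w + 2 ≤ j := by omega
  · calc _ ≤ #(powersetCard 1 O ∪ powersetCard 2 O) := card_le_card fun s hs => by
            obtain ⟨hsO, hlt⟩ := key s (mem_filter.mp hs).2
            have := (mem_filter.mp hs).2.1
            simp only [mem_union, mem_powersetCard, hsO, true_and]
            omega
      _ ≤ (w + 1).choose 2 := by
          rw [Nat.choose_succ_succ', Nat.choose_one_right]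
          simpa only [card_powersetCard, ← hj, hjw, Nat.choose_one_right] using
            card_union_le (powersetCard 1 O) (powersetCard 2 O)
  · calc _ ≤ #(powersetCard 2 O) := card_le_card fun s hs => by
            obtain ⟨hsO, hlt⟩ := key s (mem_filter.mp hs).2
            have := (mem_filter.mp hs).2.1
            simp only [mem_powersetCard, hsO, true_and]
            omega
      _ = (w + 1).choose 2 := by rw [card_powersetCard, ← hj, hjw]
  · calc _ ≤ #(∅ : Finset (Finset α)) := card_le_card fun s hs => by
            obtain ⟨-, hlt⟩ := key s (mem_filter.mp hs).2
            have := (mem_filter.mp hs).2.1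
            exact absurd hlt (by omega)
      _ ≤ (w + 1).choose 2 := Nat.zero_le _

end SmallSets

lemma sub_mul_succ_add_choose_two_le {n w : ℕ} (hw : w ≤ n) :
    (n - w) * (w + 1) + (w + 1).choose 2 ≤ (n + 1).choose 2 := by
  induction n, hw using Nat.le_induction with
  | base => simp
  | succ n hwn ih =>
    rw [Nat.choose_succ_succ' (n + 1), Nat.choose_one_right, Nat.sub_add_comm hwn]
    nlinarith

section Toggle

variable {ι : Type*} [DecidableEq ι]

def toggle (b : ι → Bool) (s : Finset ι) : ι → Bool :=
  fun i => if i ∈ s then !b i else b i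

lemma ne_toggle_iff (b : ι → Bool) (s : Finset ι) (i : ι) : b i ≠ toggle b s i ↔ i ∈ s := by
  by_cases h : i ∈ s <;> simp [toggle, h]

lemma hammingDist_toggle [Fintype ι] (b : ι → Bool) (s : Finset ι) :
    hammingDist b (toggle b s) = #s := by
  simp [hammingDist, ne_toggle_iff]

lemma toggle_injective (b : ι → Bool) : Function.Injective (toggle b) := fun s t h => by
  ext i
  rw [← ne_toggle_iff b s, ← ne_toggle_iff b t, h]

end Toggle

lemma wt_toggle {n : ℕ} (b : Fin n → Bool) (s : Finset (Fin n)) :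
    wt (toggle b s) = #(({i | b i = true} : Finset (Fin n)) ∆ s) := by
  rw [wt]
  congr 1
  ext i
  by_cases h : i ∈ s <;> cases b i <;> simp [toggle, mem_symmDiff, h]

lemma card_neighbours_ge {n w : ℕ} (b : Fin n → Bool) (hb : w ≤ wt b) :
    (n - w) * (w + 1) ≤ #{b' | b' ≠ b ∧ w ≤ wt b' ∧ hammingDist b b' ≤ 2} := by
  set O : Finset (Fin n) := {i | b i = true}
  have hwn : w ≤ n := hb.trans (card_le_univ O |>.trans_eq (Fintype.card_fin n))
  have hsplit := card_filter_add_card_filter_not (s := {s : Finset (Fin n) | 1 ≤ #s ∧ #s ≤ 2})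
    (fun s => w ≤ #(O ∆ s))
  simp only [filter_filter, not_le, card_filter_one_le_card_le_two, Fintype.card_fin] at hsplit
  have hbad := card_filter_card_symmDiff_lt_le O hb
  have harith := sub_mul_succ_add_choose_two_le hwn
  calc (n - w) * (w + 1) ≤ #{s : Finset (Fin n) | (1 ≤ #s ∧ #s ≤ 2) ∧ w ≤ #(O ∆ s)} := by
        omega
    _ ≤ _ := by
      refine card_le_card_of_injOn (toggle b) (fun s hs => ?_) (toggle_injective b).injOn
      simp only [coe_filter, mem_univ, true_and, Set.mem_ofPred_eq] at hs ⊢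
      refine ⟨fun h => ?_, (wt_toggle b s).symm ▸ hs.2, (hammingDist_toggle b s).symm ▸ hs.1.2⟩
      have := hammingDist_toggle b s
      rw [h, hammingDist_self] at this
      omega

section Packing

variable {ι α : Type*} [Fintype ι] [DecidableEq ι]

def alterations (x : ι → α) (A : ι → Finset α) (E : Finset ι) : Finset (ι → α) :=
  Fintype.piFinset fun i => if i ∈ E then A i else {x i}

lemma mem_alterations {x : ι → α} {A : ι → Finset α} {E : Finset ι} {c : ι → α} :
    c ∈ alterations x A E ↔ ∀ i, (i ∈ E → c i ∈ A i) ∧ (i ∉ E → c i = x i) := by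
  simp only [alterations, Fintype.mem_piFinset]
  refine forall_congr' fun i => ?_
  by_cases hi : i ∈ E <;> simp [hi]

lemma choose_mul_pow_le_card_biUnion_alterations [DecidableEq α] (x : ι → α) (A : ι → Finset α)
    (hx : ∀ i, x i ∉ A i) {K : ℕ} (hK : ∀ i, K ≤ #(A i)) (e : ℕ) :
    (Fintype.card ι).choose e * K ^ e ≤ #((powersetCard e univ).biUnion (alterations x A)) := by
  have hdisj : (powersetCard e (univ : Finset ι) : Set (Finset ι)).PairwiseDisjoint
      (alterations x A) := by
    intro E _ E' _ hne
    refine disjoint_left.mpr fun c hc hc' => hne ?_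
    rw [mem_alterations] at hc hc'
    ext i
    by_cases hi : i ∈ E <;> by_cases hi' : i ∈ E'
    all_goals simp only [hi, hi']
    · exact (hx i ((hc' i).2 hi' ▸ (hc i).1 hi)).elim
    · exact (hx i ((hc i).2 hi ▸ (hc' i).1 hi')).elim
  rw [card_biUnion hdisj, ← card_univ, ← card_powersetCard, ← smul_eq_mul, ← sum_const]
  refine sum_le_sum fun E hE => ?_
  calc K ^ e = ∏ _i ∈ E, K := by rw [prod_const, (mem_powersetCard_univ.mp hE)]
    _ ≤ ∏ i ∈ E, #(A i) := prod_le_prod' fun i _ => hK i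
    _ = ∏ i, if i ∈ E then #(A i) else 1 := by rw [prod_ite_mem, univ_inter]
    _ = #(alterations x A E) := by
      rw [alterations, Fintype.card_piFinset]
      exact prod_congr rfl fun i _ => by split_ifs <;> simp

omit [DecidableEq ι] in
lemma card_mul_le_card_of_le_card_ball {β : ι → Type*} [∀ i, DecidableEq (β i)]
    {C X : Finset (∀ i, β i)} {r V : ℕ}
    (hC : ∀ x ∈ C, ∀ y ∈ C, x ≠ y → 2 * r < hammingDist x y)
    (hV : ∀ x ∈ C, V ≤ #{y ∈ X | hammingDist x y ≤ r}) :
    #C * V ≤ #X := by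
  have hdisj : (C : Set (∀ i, β i)).PairwiseDisjoint fun x => {y ∈ X | hammingDist x y ≤ r} := by
    intro x hx x' hx' hne
    refine disjoint_left.mpr fun y hy hy' => ?_
    have := hammingDist_triangle x y x'
    rw [hammingDist_comm y x'] at this
    have := hC x hx x' hx' hne
    simp only [mem_filter] at hy hy'
    omega
  calc #C * V = ∑ _x ∈ C, V := by rw [sum_const, smul_eq_mul]
    _ ≤ ∑ x ∈ C, #{y ∈ X | hammingDist x y ≤ r} := sum_le_sum hV
    _ = #(C.biUnion fun x => {y ∈ X | hammingDist x y ≤ r}) := (card_biUnion hdisj).symm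
    _ ≤ #X := card_le_card (biUnion_subset.mpr fun _ _ => filter_subset _ _)

end Packing

section Space

variable {m L : ℕ}

def heavyWords (L w : ℕ) : Finset (Fin L → Bool) := {b | w ≤ wt b}

def seccWords (m L w : ℕ) : Finset (Fin (m * L) → Bool) :=
  {x | ∀ i, subblock m L x i ∈ heavyWords L w}

lemma coe_seccWords (w : ℕ) : (seccWords m L w : Set (Fin (m * L) → Bool)) = SECCspace m L w := by
  ext x
  simp [seccWords, heavyWords, SECCspace]

lemma wt_le (b : Fin L → Bool) : wt b ≤ L :=
  (card_le_univ _).trans_eq (Fintype.card_fin L)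

lemma card_wt_eq_le (j : ℕ) : #{b : Fin L → Bool | wt b = j} ≤ L.choose j := by
  calc #{b : Fin L → Bool | wt b = j}
      ≤ #(powersetCard j (univ : Finset (Fin L))) := by
        refine card_le_card_of_injOn (fun b => ({i | b i = true} : Finset (Fin L)))
          (fun b hb => ?_) ?_
        · exact mem_powersetCard_univ.mpr (mem_filter.mp hb).2
        · intro b _ b' _ h
          funext i
          simpa using congrArg (i ∈ ·) h
    _ = L.choose j := by rw [card_powersetCard, card_univ, Fintype.card_fin]

lemma card_heavyWords_le (w : ℕ) : #(heavyWords L w) ≤ ∑ j ∈ Icc w L, L.choose j := by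
  rw [heavyWords, card_eq_sum_card_fiberwise (f := wt) (t := Icc w L) fun b hb =>
    mem_Icc.mpr ⟨(mem_filter.mp hb).2, wt_le b⟩]
  refine sum_le_sum fun j _ => (card_le_card fun b hb => ?_).trans (card_wt_eq_le j)
  simp only [mem_filter] at hb ⊢
  exact ⟨hb.1.1, hb.2⟩

lemma card_seccWords (w : ℕ) : #(seccWords m L w) = #(heavyWords L w) ^ m := by
  rw [card_equiv (blockEquiv m L) (t := Fintype.piFinset fun _ => heavyWords L w)
    fun x => by simp [seccWords, Fintype.mem_piFinset], Fintype.card_piFinset, prod_const,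
    card_univ, Fintype.card_fin]

lemma subblock_blockEquiv_symm (c : Fin m → Fin L → Bool) :
    subblock m L ((blockEquiv m L).symm c) = c := by
  rw [← blockEquiv_apply, Equiv.apply_symm_apply]

lemma choose_mul_pow_le_card_ball {w : ℕ} {x : Fin (m * L) → Bool} (hx : x ∈ seccWords m L w)
    (e : ℕ) :
    m.choose e * ((L - w) * (w + 1)) ^ e ≤ #{y ∈ seccWords m L w | hammingDist x y ≤ 2 * e} := by
  simp only [seccWords, heavyWords, mem_filter, mem_univ, true_and] at hx
  set A : Fin m → Finset (Fin L → Bool) := fun i =>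
    {b | b ≠ subblock m L x i ∧ w ≤ wt b ∧ hammingDist (subblock m L x i) b ≤ 2}
  have hA : ∀ i, (L - w) * (w + 1) ≤ #(A i) := fun i => card_neighbours_ge _ (hx i)
  have hxA : ∀ i, subblock m L x i ∉ A i := fun i => by simp [A]
  calc m.choose e * ((L - w) * (w + 1)) ^ e
      ≤ #((powersetCard e univ).biUnion (alterations (subblock m L x) A)) := by
        simpa using choose_mul_pow_le_card_biUnion_alterations _ A hxA hA e
    _ ≤ _ := by
      refine card_le_card_of_injOn (blockEquiv m L).symm (fun c hc => ?_)
        (blockEquiv m L).symm.injective.injOn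
      simp only [mem_coe, mem_biUnion, mem_alterations, mem_powersetCard_univ] at hc
      obtain ⟨E, hE, hc⟩ := hc
      have hci : ∀ i, c i = subblock m L x i ∨ c i ∈ A i := fun i => by
        by_cases hi : i ∈ E
        · exact Or.inr ((hc i).1 hi)
        · exact Or.inl ((hc i).2 hi)
      simp only [coe_filter, seccWords, heavyWords, mem_filter, mem_univ, true_and,
        Set.mem_ofPred_eq, subblock_blockEquiv_symm, hammingDist_eq_sum_subblock x]
      refine ⟨fun i => ?_, ?_⟩
      · rcases hci i with h | h
        · exact h ▸ hx i
        · exact (mem_filter.mp h).2.2.1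
      · calc ∑ i, hammingDist (subblock m L x i) (c i)
            = ∑ i ∈ E, hammingDist (subblock m L x i) (c i) :=
              (sum_subset (subset_univ E) fun i _ hi => by rw [(hc i).2 hi, hammingDist_self]).symm
          _ ≤ ∑ _i ∈ E, 2 := sum_le_sum fun i hi => (mem_filter.mp ((hc i).1 hi)).2.2.2
          _ = 2 * e := by rw [sum_const, hE, smul_eq_mul, mul_comm]

end Space

section MaxSECC

lemma bddAbove_card_isCode {n : ℕ} (Sp : Set (Fin n → Bool)) (d : ℕ) :
    BddAbove {k | ∃ C, isCode Sp d C ∧ #C = k} :=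
  ⟨Fintype.card (Fin n → Bool), by rintro k ⟨C, -, rfl⟩; exact card_le_univ C⟩

lemma exists_isCode_card_eq_maxSECC (m L d w : ℕ) :
    ∃ C, isCode (SECCspace m L w) d C ∧ #C = maxSECC m L d w :=
  Nat.sSup_mem (s := {k | ∃ C, isCode (SECCspace m L w) d C ∧ #C = k})
    ⟨0, ∅, ⟨by simp, by simp⟩, rfl⟩ (bddAbove_card_isCode _ d)

lemma one_le_maxSECC {m L d w : ℕ} (hw : w ≤ L) : 1 ≤ maxSECC m L d w := by
  refine le_csSup (bddAbove_card_isCode _ d) ⟨{fun _ => true}, ⟨?_, by simp⟩, rfl⟩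
  intro x hx i
  rw [mem_coe, mem_singleton] at hx
  subst hx
  simpa [wt, subblock] using hw

lemma maxSECC_mul_choose_mul_pow_le {m L d w e : ℕ} (hde : 4 * e < d) :
    maxSECC m L d w * (m.choose e * ((L - w) * (w + 1)) ^ e) ≤
      (∑ j ∈ Icc w L, L.choose j) ^ m := by
  obtain ⟨C, ⟨hCS, hCd⟩, hC⟩ := exists_isCode_card_eq_maxSECC m L d w
  rw [← hC]
  calc #C * (m.choose e * ((L - w) * (w + 1)) ^ e) ≤ #(seccWords m L w) :=
        card_mul_le_card_of_le_card_ball (r := 2 * e)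
          (fun x hx y hy hxy => by have := hCd x hx y hy hxy; omega)
          fun x hx => choose_mul_pow_le_card_ball
            (by rw [← mem_coe, coe_seccWords]; exact hCS hx) e
    _ ≤ (∑ j ∈ Icc w L, L.choose j) ^ m := by
      rw [card_seccWords]
      exact Nat.pow_le_pow_left (card_heavyWords_le w) m

end MaxSECC

/-- The ratio of consecutive terms is `(m - k) e / ((k + 1) (m - e))`, which is `≥ 1` exactly
when `k < e`. -/
lemma choose_mul_pow_mul_pow_le {m e k : ℕ} (he : e ≤ m) (hk : k ≤ m) :
    m.choose k * (e ^ k * (m - e) ^ (m - k)) ≤ m.choose e * (e ^ e * (m - e) ^ (m - e)) := by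
  set T : ℕ → ℕ := fun k => m.choose k * (e ^ k * (m - e) ^ (m - k))
  change T k ≤ T e
  rcases he.eq_or_lt with rfl | hem
  · rcases hk.eq_or_lt with rfl | hkm
    · exact le_rfl
    · simp [T, zero_pow (Nat.sub_ne_zero_of_lt hkm)]
  have hstep : ∀ k < m, T (k + 1) * ((k + 1) * (m - e)) = T k * ((m - k) * e) := by
    intro k hk
    obtain ⟨j, hj⟩ : ∃ j, m - k = j + 1 := ⟨m - k - 1, by omega⟩
    have hj' : m - (k + 1) = j := by omega
    have hchoose := Nat.choose_succ_right_eq m k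
    rw [hj] at hchoose
    simp only [T, hj, hj', pow_succ]
    calc m.choose (k + 1) * (e ^ k * e * (m - e) ^ j) * ((k + 1) * (m - e))
        = m.choose (k + 1) * (k + 1) * (e ^ k * e * (m - e) ^ j * (m - e)) := by ring
      _ = m.choose k * (e ^ k * ((m - e) ^ j * (m - e))) * ((j + 1) * e) := by
        rw [hchoose]; ring
  have hpos : ∀ k, 0 < (k + 1) * (m - e) := fun k => Nat.mul_pos k.succ_pos (by omega)
  rcases le_total k e with hke | hek
  · refine monotoneOn_of_le_succ Set.ordConnected_Iic (fun j _ _ hj => ?_)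
      (Set.mem_Iic.mpr hke) Set.self_mem_Iic hke
    rw [Order.succ_eq_add_one, Set.mem_Iic] at hj
    rw [Order.succ_eq_add_one]
    refine Nat.le_of_mul_le_mul_right ?_ (hpos j)
    rw [hstep j (by omega)]
    exact Nat.mul_le_mul_left _ (by rw [mul_comm (m - j)]; exact Nat.mul_le_mul hj (by omega))
  · refine antitoneOn_of_succ_le Set.ordConnected_Icc (fun j _ hj hj' => ?_)
      (Set.left_mem_Icc.mpr he) ⟨hek, hk⟩ hek
    rw [Set.mem_Icc] at hj
    rw [Order.succ_eq_add_one, Set.mem_Icc] at hj'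
    rw [Order.succ_eq_add_one]
    refine Nat.le_of_mul_le_mul_right ?_ (hpos j)
    rw [hstep j (by omega)]
    exact Nat.mul_le_mul_left _ (by rw [mul_comm]; exact Nat.mul_le_mul (by omega) (by omega))

lemma pow_self_le_succ_mul_choose_mul_pow_mul_pow {m e : ℕ} (he : e ≤ m) :
    m ^ m ≤ (m + 1) * (m.choose e * (e ^ e * (m - e) ^ (m - e))) := by
  calc m ^ m = ∑ k ∈ range (m + 1), e ^ k * (m - e) ^ (m - k) * m.choose k := by
        simpa only [Nat.add_sub_cancel' he, Nat.cast_id] using add_pow e (m - e) m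
    _ ≤ ∑ _k ∈ range (m + 1), m.choose e * (e ^ e * (m - e) ^ (m - e)) :=
        sum_le_sum fun k hk => by
          rw [mul_comm, ← mul_assoc, mul_assoc (m.choose k)]
          exact choose_mul_pow_mul_pow_le he (Nat.lt_succ_iff.mp (mem_range.mp hk))
    _ = (m + 1) * (m.choose e * (e ^ e * (m - e) ^ (m - e))) := by
        rw [sum_const, card_range, smul_eq_mul]

lemma binent_eq_binEntropy_div (p : ℝ) : binent p = Real.binEntropy p / Real.log 2 := by
  simp only [binent, Real.binEntropy, Real.logb, Real.log_inv]
  ring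

lemma mul_binent_le_logb_choose_add {m e : ℕ} (hm : 0 < m) (he : e ≤ m) :
    m * binent (e / m) ≤ Real.logb 2 (m.choose e) + Real.logb 2 (m + 1) := by
  set p : ℝ := e / m with hp
  have hm' : (m : ℝ) ≠ 0 := by positivity
  have hmp : (m : ℝ) * p = e := by rw [hp]; field_simp
  have hq : 1 - p = ((m - e : ℕ) : ℝ) / m := by
    rw [Nat.cast_sub he, eq_div_iff hm']
    linarith
  have hkey : 1 ≤ ((m : ℝ) + 1) * m.choose e * (p ^ e * (1 - p) ^ (m - e)) := by
    have h := (Nat.cast_le (α := ℝ)).mpr (pow_self_le_succ_mul_choose_mul_pow_mul_pow he)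
    push_cast at h
    rw [hq, div_pow, div_pow, div_mul_div_comm, ← pow_add, Nat.add_sub_cancel' he, ← mul_div_assoc,
      one_le_div (by positivity)]
    linarith
  have hne : ((m : ℝ) + 1) * m.choose e * (p ^ e * (1 - p) ^ (m - e)) ≠ 0 := by positivity
  obtain ⟨⟨hA, hB⟩, hP, hQ⟩ := by simpa only [mul_ne_zero_iff] using hne
  have hlog := Real.logb_nonneg one_lt_two hkey
  rw [Real.logb_mul (mul_ne_zero hA hB) (mul_ne_zero hP hQ), Real.logb_mul hA hB,
    Real.logb_mul hP hQ, Real.logb_pow, Real.logb_pow] at hlog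
  have hbin : (m : ℝ) * binent p =
      -(e * Real.logb 2 p) - ((m - e : ℕ) : ℝ) * Real.logb 2 (1 - p) := by
    rw [binent, Nat.cast_sub he]
    linear_combination (Real.logb 2 (1 - p) - Real.logb 2 p) * hmp
  linarith

lemma continuous_binent : Continuous binent := by
  simpa only [← funext binent_eq_binEntropy_div] using
    Real.binEntropy_continuous.div_const (Real.log 2)

lemma tendsto_logb_succ_div_atTop :
    Tendsto (fun m : ℕ => Real.logb 2 (m + 1) / m) atTop (𝓝 0) := by
  have hlog2 : Real.log 2 ≠ 0 := by positivity
  refine ((Real.tendsto_pow_log_div_mul_add_atTop (Real.log 2) (-Real.log 2) 1 hlog2).comp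
    (tendsto_atTop_add_const_right _ 1 tendsto_natCast_atTop_atTop)).congr fun m => ?_
  simp only [Function.comp_apply, pow_one, Real.logb, div_div]
  ring_nf

section Asymptotics

variable {L : ℕ} {δ : ℝ}

/-- The largest `e` with `4 * e < ⌊m L δ⌋₊` (when the latter is positive), so that balls of
radius `2 * e` around the words of a code of minimum distance `⌊m L δ⌋₊` are disjoint. -/
noncomputable def quarterDist (L : ℕ) (δ : ℝ) (m : ℕ) : ℕ := (⌊(m : ℝ) * L * δ⌋₊ - 1) / 4

lemma quarterDist_le (hLδ : L * δ ≤ 4) (m : ℕ) : quarterDist L δ m ≤ m := by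
  have : ⌊(m : ℝ) * L * δ⌋₊ ≤ 4 * m :=
    Nat.floor_le_of_le (by push_cast; nlinarith [(Nat.cast_nonneg m : (0 : ℝ) ≤ m)])
  unfold quarterDist
  omega

lemma eventually_one_le_floor (hLδ : 0 < L * δ) :
    ∀ᶠ m : ℕ in atTop, 1 ≤ ⌊(m : ℝ) * L * δ⌋₊ := by
  have h : Tendsto (fun m : ℕ => (m : ℝ) * L * δ) atTop atTop := by
    simpa only [mul_assoc] using tendsto_natCast_atTop_atTop.atTop_mul_const hLδ
  exact (tendsto_nat_floor_atTop.comp h).eventually_ge_atTop 1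

lemma tendsto_quarterDist_div (hLδ : 0 ≤ L * δ) :
    Tendsto (fun m : ℕ => (quarterDist L δ m : ℝ) / m) atTop (𝓝 (L * δ / 4)) := by
  have hfloor : Tendsto (fun m : ℕ => (⌊(m : ℝ) * L * δ⌋₊ : ℝ) / m) atTop (𝓝 (L * δ)) := by
    refine ((tendsto_nat_floor_mul_div_atTop hLδ).comp tendsto_natCast_atTop_atTop).congr
      fun m => ?_
    rw [Function.comp_apply, mul_comm ((L : ℝ) * δ), ← mul_assoc]
  have hlower := (hfloor.div_const 4).sub (tendsto_one_div_atTop_nhds_zero_nat (𝕜 := ℝ))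
  rw [sub_zero] at hlower
  refine tendsto_of_tendsto_of_tendsto_of_le_of_le hlower (hfloor.div_const 4) (fun m => ?_)
    fun m => ?_
  · have h : (⌊(m : ℝ) * L * δ⌋₊ : ℝ) ≤ 4 * quarterDist L δ m + 4 := by
      exact_mod_cast (show ⌊(m : ℝ) * L * δ⌋₊ ≤ 4 * quarterDist L δ m + 4 by
        unfold quarterDist; omega)
    calc _ = ((⌊(m : ℝ) * L * δ⌋₊ : ℝ) / 4 - 1) / m := by ring
      _ ≤ _ := div_le_div_of_nonneg_right (by linarith) (Nat.cast_nonneg m)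
  · have h : 4 * (quarterDist L δ m : ℝ) ≤ ⌊(m : ℝ) * L * δ⌋₊ := by
      exact_mod_cast (show 4 * quarterDist L δ m ≤ ⌊(m : ℝ) * L * δ⌋₊ by
        unfold quarterDist; omega)
    calc _ ≤ ((⌊(m : ℝ) * L * δ⌋₊ : ℝ) / 4) / m := div_le_div_of_nonneg_right (by linarith)
          (Nat.cast_nonneg m)
      _ = _ := by ring

end Asymptotics

lemma logb_maxSECC_div_le {m L d w e : ℕ} (hm : 0 < m) (he : e ≤ m) (hde : 4 * e < d)
    (hw : w < L) :
    Real.logb 2 (maxSECC m L d w) / m ≤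
      Real.logb 2 ((∑ j ∈ Icc w L, L.choose j : ℕ)) - binent (e / m)
        + Real.logb 2 (m + 1) / m - e / m * Real.logb 2 (((L - w) * (w + 1) : ℕ)) := by
  set N := ∑ j ∈ Icc w L, L.choose j
  set K := (L - w) * (w + 1)
  have hS : (0 : ℝ) < maxSECC m L d w := by exact_mod_cast one_le_maxSECC hw.le
  have hC : (0 : ℝ) < m.choose e := by exact_mod_cast Nat.choose_pos he
  have hK : (0 : ℝ) < K := by exact_mod_cast Nat.mul_pos (Nat.sub_pos_of_lt hw) w.succ_pos
  have hpack : Real.logb 2 (maxSECC m L d w) + (Real.logb 2 (m.choose e) + e * Real.logb 2 K)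
      ≤ m * Real.logb 2 N := by
    have h : (maxSECC m L d w : ℝ) * ((m.choose e : ℝ) * (K : ℝ) ^ e) ≤ (N : ℝ) ^ m := by
      exact_mod_cast maxSECC_mul_choose_mul_pow_le hde
    have h := Real.logb_le_logb_of_le one_lt_two (by positivity) h
    rwa [Real.logb_mul hS.ne' (by positivity), Real.logb_mul hC.ne' (by positivity),
      Real.logb_pow, Real.logb_pow] at h
  have hent := mul_binent_le_logb_choose_add hm he
  rw [div_le_iff₀ (by exact_mod_cast hm)]
  have hm' : (m : ℝ) ≠ 0 := by positivity
  have : (Real.logb 2 N - binent (e / m) + Real.logb 2 (m + 1) / m - e / m * Real.logb 2 K) * m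
      = m * Real.logb 2 N - m * binent (e / m) + Real.logb 2 (m + 1) - e * Real.logb 2 K := by
    field_simp
  rw [this]
  linarith

end SECC

open SECC in
theorem stmt_16_general (L w : ℕ) (hL : 0 < L) (hw2 : w ≤ L - 1)
    (δ : ℝ) (hδ0 : 0 < δ)
    (hδ : δ < min (2 * ((w : ℝ) / L) * (1 - (w : ℝ) / L)) (4 / (L : ℝ))) :
    sigmaRate L δ w ≤
      (1 / (L : ℝ)) * Real.logb 2 ((∑ j ∈ Finset.Icc w L, L.choose j : ℕ))
      - (1 / (L : ℝ)) * binent ((L : ℝ) * δ / 4)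
      - (δ / 4) * Real.logb 2 (((L - w) * (w + 1) : ℕ)) := by
  have hw : w < L := by omega
  have hL' : (0 : ℝ) < L := by exact_mod_cast hL
  have hLδ : (L : ℝ) * δ < 4 := by
    have := (lt_div_iff₀ hL').mp (hδ.trans_le (min_le_right _ _))
    linarith
  have hLδ0 : (0 : ℝ) < L * δ := by positivity
  set N := Real.logb 2 ((∑ j ∈ Finset.Icc w L, L.choose j : ℕ))
  set K := Real.logb 2 (((L - w) * (w + 1) : ℕ))
  set e := quarterDist L δ
  set bound : ℕ → ℝ := fun m => (N - binent (e m / m) + Real.logb 2 (m + 1) / m - e m / m * K) / L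
  have hle : ∀ᶠ m : ℕ in atTop,
      Real.logb 2 (maxSECC m L ⌊(m : ℝ) * L * δ⌋₊ w) / (m * L) ≤ bound m := by
    filter_upwards [eventually_gt_atTop 0, eventually_one_le_floor hLδ0] with m hm hd
    rw [← div_div]
    refine div_le_div_of_nonneg_right (logb_maxSECC_div_le hm (quarterDist_le hLδ.le m) ?_ hw)
      hL'.le
    simp only [e, quarterDist]
    omega
  have hlim : Tendsto bound atTop (𝓝 ((N - binent (L * δ / 4) + 0 - L * δ / 4 * K) / L)) := by
    have he := tendsto_quarterDist_div hLδ0.le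
    exact (((tendsto_const_nhds.sub ((continuous_binent.tendsto _).comp he)).add
      tendsto_logb_succ_div_atTop).sub (he.mul_const K)).div_const _
  have hnonneg : ∀ m : ℕ, 0 ≤ Real.logb 2 (maxSECC m L ⌊(m : ℝ) * L * δ⌋₊ w) / (m * L) :=
    fun m => div_nonneg (Real.logb_nonneg one_lt_two (by exact_mod_cast one_le_maxSECC hw.le))
      (by positivity)
  calc sigmaRate L δ w ≤ (N - binent (L * δ / 4) + 0 - L * δ / 4 * K) / L :=
        (limsup_le_limsup hle
          (isBoundedUnder_of_eventually_ge (.of_forall hnonneg)).isCoboundedUnder_le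
          hlim.isBoundedUnder_le).trans_eq hlim.limsup_eq
    _ = _ := by
      field_simp
      ring

/-- Asymptotic sphere-packing bound for SECCs (`0 < δ < min{δ*, 4/L}`):
`σ(L,δ,w/L) ≤ (1/L)·log(Σ_{j=w}^{L} C(L,j)) − (1/L)·h(Lδ/4) − (δ/4)·log((L-w)(w+1))`. -/
theorem stmt_16 (L w : ℕ) (hL : 0 < L) (hw1 : 1 ≤ w) (hw2 : w ≤ L - 1)
    (δ : ℝ) (hδ0 : 0 < δ)
    (hδ : δ < min (2 * ((w : ℝ) / L) * (1 - (w : ℝ) / L)) (4 / (L : ℝ))) :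
    sigmaRate L δ w ≤
      (1 / (L : ℝ)) * Real.logb 2 ((∑ j ∈ Finset.Icc w L, L.choose j : ℕ))
      - (1 / (L : ℝ)) * binent ((L : ℝ) * δ / 4)
      - (δ / 4) * Real.logb 2 (((L - w) * (w + 1) : ℕ)) :=
  stmt_16_general L w hL hw2 δ hδ0 hδ
end

section
/- Let L ≥ 4 be an even integer and define, for real δ ∈ [0,1], f̃_L(δ) = 1 − h(δ) − (1/L)·log C(L,L/2) + (δ/2)·log(L/2) + (1/L)·h(δL/4), where C(a,b) is the binomial coefficient. Then f̃_L(0) > 0 and f̃_L(1/L) < 0; consequently there exists δ̃ ∈ (0, 1/L) such that f̃_L(δ̃) = 0 and f̃_L(δ) > 0 for all δ with 0 ≤ δ < δ̃. -/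
open Finset Filter

/-- The function `f̃_L(δ) = 1 − h(δ) − (1/L)·log C(L,L/2) + (δ/2)·log(L/2)
    + (1/L)·h(δL/4)`. -/
noncomputable def fTilde (L : ℕ) (δ : ℝ) : ℝ :=
  1 - binent δ - (1 / (L : ℝ)) * Real.logb 2 (L.choose (L / 2))
    + (δ / 2) * Real.logb 2 ((L : ℝ) / 2) + (1 / (L : ℝ)) * binent (δ * (L : ℝ) / 4)

/-!
`f̃_L(0) = 1 - log C(L, L/2) / L > 0` since `C(L, L/2) < 2^L`. For `L = 2n` and `δ = 1/L`,
Bernoulli's inequality gives `L h(1/L) ≥ log L + 1`, and `C(2n, n) ≥ 4^n / (2√n)`; with these the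
`n`-dependent terms of `L f̃_L(1/L)` cancel and leave `L f̃_L(1/L) ≤ h(1/4) - 1 < 0`. The root `δ̃`
is then the first zero of `f̃_L` on `[0, 1/L]`.
-/

open Real

lemma binent_eq_binEntropy_div_log_two (p : ℝ) : binent p = binEntropy p / log 2 := by
  simp only [binent, binEntropy, logb, log_inv]
  ring

lemma continuous_binent : Continuous binent := by
  rw [funext binent_eq_binEntropy_div_log_two]
  fun_prop

@[simp] lemma binent_zero : binent 0 = 0 := by
  simp [binent]

lemma binent_lt_one {p : ℝ} (hp : p ≠ 2⁻¹) : binent p < 1 := by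
  rw [binent_eq_binEntropy_div_log_two, div_lt_one (log_pos one_lt_two)]
  exact binEntropy_lt_log_two.mpr hp

/-- `(m + 1) h(1/(m + 1)) = log₂ (m + 1) + log₂ (1 + 1/m)^m`, and `(1 + 1/m)^m ≥ 2` by Bernoulli's
inequality. -/
lemma logb_add_one_add_one_le_mul_binent (m : ℕ) (hm : 1 ≤ m) :
    logb 2 (m + 1) + 1 ≤ (m + 1) * binent (1 / (m + 1)) := by
  have hm0 : (0 : ℝ) < m := by exact_mod_cast hm
  have hbernoulli : (2 : ℝ) ≤ (1 + 1 / m) ^ m := by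
    have h := one_add_mul_le_pow (by linarith [one_div_pos.mpr hm0] : (-2 : ℝ) ≤ 1 / m) m
    rwa [mul_one_div_cancel hm0.ne', one_add_one_eq_two] at h
  have hlog : 1 ≤ m * (logb 2 (m + 1) - logb 2 m) := by
    have h := logb_le_logb_of_le one_lt_two two_pos hbernoulli
    rwa [logb_self_eq_one one_lt_two, logb_pow, one_add_div hm0.ne',
      logb_div (by positivity) hm0.ne'] at h
  have hexpand : (m + 1) * binent (1 / (m + 1)) =
      logb 2 (m + 1) + m * (logb 2 (m + 1) - logb 2 m) := by
    have hm1 : (m : ℝ) + 1 ≠ 0 := by positivity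
    rw [binent, show (1 : ℝ) - 1 / (m + 1) = m / (m + 1) by field_simp; ring, one_div,
      logb_inv, logb_div hm0.ne' hm1]
    field_simp
    ring
  linarith

lemma sixteen_pow_le_mul_centralBinom_sq (n : ℕ) (hn : 1 ≤ n) :
    16 ^ n ≤ 4 * n * n.centralBinom ^ 2 := by
  induction n, hn using Nat.le_induction with
  | base => decide
  | succ n hn ih =>
    apply Nat.le_of_mul_le_mul_right _ (Nat.succ_pos n)
    calc 16 ^ (n + 1) * (n + 1) = 16 * 16 ^ n * (n + 1) := by ring
      _ ≤ 16 * (4 * n * n.centralBinom ^ 2) * (n + 1) := by gcongr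
      _ ≤ 4 * (2 * (2 * n + 1) * n.centralBinom) ^ 2 := by nlinarith
      _ = 4 * ((n + 1) * (n + 1).centralBinom) ^ 2 := by rw [Nat.succ_mul_centralBinom_succ]
      _ = 4 * (n + 1) * (n + 1).centralBinom ^ 2 * (n + 1) := by ring

lemma sub_le_logb_centralBinom (n : ℕ) (hn : 1 ≤ n) :
    2 * n - 1 - logb 2 n / 2 ≤ logb 2 n.centralBinom := by
  have hn0 : (0 : ℝ) < n := by exact_mod_cast hn
  have hC : (0 : ℝ) < n.centralBinom := by exact_mod_cast n.centralBinom_pos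
  have h := logb_le_logb_of_le (b := 2) one_lt_two (by positivity)
    (by exact_mod_cast sixteen_pow_le_mul_centralBinom_sq n hn :
      (16 : ℝ) ^ n ≤ 4 * n * (n.centralBinom : ℝ) ^ 2)
  rw [show (16 : ℝ) ^ n = 2 ^ (4 * n) by rw [pow_mul]; norm_num, logb_pow,
    logb_mul (by positivity) (by positivity), logb_mul (by norm_num) hn0.ne', logb_pow,
    show (4 : ℝ) = 2 ^ 2 by norm_num, logb_pow, logb_self_eq_one one_lt_two] at h
  push_cast at h
  linarith

lemma logb_centralBinom_lt (n : ℕ) (hn : n ≠ 0) : logb 2 n.centralBinom < 2 * n := by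
  have h := logb_lt_logb (b := 2) one_lt_two (by exact_mod_cast n.centralBinom_pos)
    (by exact_mod_cast Nat.centralBinom_lt_four_pow hn : (n.centralBinom : ℝ) < 4 ^ n)
  rwa [show (4 : ℝ) = 2 ^ 2 by norm_num, ← pow_mul, logb_pow, logb_self_eq_one one_lt_two,
    mul_one, Nat.cast_mul, Nat.cast_ofNat] at h

lemma choose_two_mul_div_two (n : ℕ) : (2 * n).choose (2 * n / 2) = n.centralBinom := by
  rw [Nat.mul_div_cancel_left n two_pos, Nat.centralBinom_eq_two_mul_choose]

lemma continuous_fTilde (L : ℕ) : Continuous (fTilde L) := by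
  unfold fTilde
  have := continuous_binent
  fun_prop

lemma fTilde_zero_pos {n : ℕ} (hn : n ≠ 0) : 0 < fTilde (2 * n) 0 := by
  have hn0 : (0 : ℝ) < n := by exact_mod_cast Nat.pos_of_ne_zero hn
  have h := logb_centralBinom_lt n hn
  simp only [fTilde, binent_zero, choose_two_mul_div_two, zero_div, zero_mul, Nat.cast_mul,
    Nat.cast_ofNat]
  rw [one_div, ← div_eq_inv_mul]
  have : logb 2 n.centralBinom / (2 * n) < 1 := (div_lt_one (by positivity)).mpr h
  linarith

lemma fTilde_inv_neg {n : ℕ} (hn : 1 ≤ n) : fTilde (2 * n) (1 / (2 * n : ℕ)) < 0 := by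
  have hn0 : (0 : ℝ) < n := by exact_mod_cast hn
  have hentropy := logb_add_one_add_one_le_mul_binent (2 * n - 1) (by omega)
  rw [Nat.cast_sub (by omega), Nat.cast_mul, Nat.cast_ofNat, Nat.cast_one, sub_add_cancel,
    logb_mul two_ne_zero hn0.ne', logb_self_eq_one one_lt_two] at hentropy
  have hcentral := sub_le_logb_centralBinom n hn
  have hquarter := binent_lt_one (by norm_num : (4 : ℝ)⁻¹ ≠ 2⁻¹)
  have hexpand : 2 * n * fTilde (2 * n) (1 / (2 * n : ℕ)) = 2 * n - 2 * n * binent (1 / (2 * n))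
      - logb 2 n.centralBinom + logb 2 n / 2 + binent 4⁻¹ := by
    rw [fTilde, choose_two_mul_div_two]
    push_cast
    rw [show (1 : ℝ) / (2 * n) * (2 * n) / 4 = 4⁻¹ by field_simp,
      show (2 * n : ℝ) / 2 = n by ring]
    field_simp
  nlinarith

/-- The infimum `c` of `{x ∈ [a, b] | f x ≤ 0}` satisfies `f c ≤ 0` and `f > 0` on `[a, c)`, so
the intermediate value theorem on `[a, c]` can only produce the zero `c` itself. -/
lemma exists_first_zero_of_pos_of_neg {f : ℝ → ℝ} {a b : ℝ} (hab : a ≤ b)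
    (hf : ContinuousOn f (Set.Icc a b)) (ha : 0 < f a) (hb : f b < 0) :
    ∃ c ∈ Set.Ioo a b, f c = 0 ∧ ∀ x ∈ Set.Ico a c, 0 < f x := by
  set S := Set.Icc a b ∩ f ⁻¹' Set.Iic 0
  have hS : IsClosed S := hf.preimage_isClosed_of_isClosed isClosed_Icc isClosed_Iic
  have hSbdd : BddBelow S := ⟨a, fun x hx => hx.1.1⟩
  have hc : sInf S ∈ S := hS.csInf_mem ⟨b, ⟨hab, le_rfl⟩, hb.le⟩ hSbdd
  set c := sInf S
  have hpos : ∀ x ∈ Set.Ico a c, 0 < f x := fun x hx => not_le.mp fun hfx =>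
    hx.2.not_ge (csInf_le hSbdd ⟨⟨hx.1, hx.2.le.trans hc.1.2⟩, hfx⟩)
  obtain ⟨y, hy, hfy⟩ := intermediate_value_Icc' hc.1.1
    (hf.mono (Set.Icc_subset_Icc_right hc.1.2)) ⟨hc.2, ha.le⟩
  obtain rfl : y = c := hy.2.eq_of_not_lt fun hlt => (hpos y ⟨hy.1, hlt⟩).ne' hfy
  refine ⟨c, ⟨hy.1.lt_of_ne fun h => ha.ne' (by rwa [h]),
    hc.1.2.lt_of_ne fun h => hb.ne (by rwa [← h])⟩, hfy, hpos⟩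

/-- For even `L ≥ 4`: `f̃_L(0) > 0`, `f̃_L(1/L) < 0`, and hence `f̃_L` has a root
`δ̃ ∈ (0, 1/L)` with `f̃_L > 0` on `[0, δ̃)`. -/
theorem stmt_17 (L : ℕ) (hL : 4 ≤ L) (hLe : Even L) :
    0 < fTilde L 0 ∧ fTilde L (1 / (L : ℝ)) < 0 ∧
    ∃ δt : ℝ, δt ∈ Set.Ioo 0 (1 / (L : ℝ)) ∧ fTilde L δt = 0 ∧
      ∀ δ : ℝ, 0 ≤ δ → δ < δt → 0 < fTilde L δ := by
  obtain ⟨n, rfl⟩ := hLe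
  rw [← two_mul] at hL ⊢
  have hzero := fTilde_zero_pos (n := n) (by omega)
  have hinv := fTilde_inv_neg (n := n) (by omega)
  obtain ⟨c, hc, hfc, hpos⟩ := exists_first_zero_of_pos_of_neg (by positivity)
    (continuous_fTilde _).continuousOn hzero hinv
  exact ⟨hzero, hinv, c, hc, hfc, fun δ hδ hδc => hpos δ ⟨hδ, hδc⟩⟩
end
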